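/- In a k-type Swap Schelling Game (k ≥ 2), if agents i and j perform a profitable swap in σ with deg(σ(i)) ≤ deg(σ(j)) and deg(σ(j)) − deg(σ(i)) ≤ 2, then Φ(σ_ij) ≥ Φ(σ); moreover, Φ(σ_ij) = Φ(σ) is possible only if the utility of agent j in σ lies strictly between 1/2 and 1. -/

import Mathlib

open SimpleGraph Finset
open scoped Classical

noncomputable def ssgUtil {V A : Type*} [Fintype V] [DecidableEq V]
    (G : SimpleGraph V) [DecidableRel G.Adj]
    {k : ℕ} (c : A → Fin k) (σ : A ≃ V) (i : A) : ℚ :=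
  (((G.neighborFinset (σ i)).filter (fun v => c (σ.symm v) = c i)).card : ℚ) /
    (G.degree (σ i) : ℚ)

def ssgSwap {V A : Type*} [DecidableEq V] (σ : A ≃ V) (i j : A) : A ≃ V :=
  σ.trans (Equiv.swap (σ i) (σ j))

def ssgProfitable {V A : Type*} [Fintype V] [DecidableEq V]
    (G : SimpleGraph V) [DecidableRel G.Adj]
    {k : ℕ} (c : A → Fin k) (σ : A ≃ V) (i j : A) : Prop :=
  c i ≠ c j ∧
    ssgUtil G c σ i < ssgUtil G c (ssgSwap σ i j) i ∧
    ssgUtil G c σ j < ssgUtil G c (ssgSwap σ i j) j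

def ssgEquilibrium {V A : Type*} [Fintype V] [DecidableEq V]
    (G : SimpleGraph V) [DecidableRel G.Adj]
    {k : ℕ} (c : A → Fin k) (σ : A ≃ V) : Prop :=
  ∀ i j : A, ¬ ssgProfitable G c σ i j

def ssgLocalEquilibrium {V A : Type*} [Fintype V] [DecidableEq V]
    (G : SimpleGraph V) [DecidableRel G.Adj]
    {k : ℕ} (c : A → Fin k) (σ : A ≃ V) : Prop :=
  ∀ i j : A, G.Adj (σ i) (σ j) → ¬ ssgProfitable G c σ i j

noncomputable def ssgWelfare {V A : Type*} [Fintype V] [DecidableEq V] [Fintype A]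
    (G : SimpleGraph V) [DecidableRel G.Adj]
    {k : ℕ} (c : A → Fin k) (σ : A ≃ V) : ℚ :=
  ∑ i : A, ssgUtil G c σ i

noncomputable def ssgPhi {V A : Type*} [Fintype V] [DecidableEq V]
    (G : SimpleGraph V) [DecidableRel G.Adj]
    {k : ℕ} (c : A → Fin k) (σ : A ≃ V) : ℕ :=
  (G.edgeFinset.filter (fun e => ∀ u ∈ e, ∀ v ∈ e, c (σ.symm u) = c (σ.symm v))).card


/-!
Put `u = σ i` and `w = σ j`, of degrees `du ≤ dw`, and count the neighbours of `u` other than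
`w` of the colours of `i` and `j` (`a1`, `b1`), and those of `w` other than `u` (`a2`, `b2`).
Only edges at `u` or `w` can change colour class, and an edge `uw` is bichromatic before and
after the swap, so `Φ(σ_ij) - Φ(σ) = (a2 + b1) - (a1 + b2)`. Profitability reads
`a1 / du < a2 / dw` and `b2 / dw < b1 / du`, and the utility of `j` is `b2 / dw`. Since
`a1 < a2`, a loss `a1 + b2 > a2 + b1` would need `b2 ≥ b1 + 2`, which `dw ≤ du + 2` and
`b1 ≤ du` rule out; in the tie `b2 = b1 + (a2 - a1) > b1` the same estimate forces `2 * b2 > dw`.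
-/

namespace SimpleGraph

variable {V α : Type*} [Fintype V] [DecidableEq V] [DecidableEq α] (G : SimpleGraph V)
  [DecidableRel G.Adj]

def monoEdgeFinset (f : V → α) : Finset (Sym2 V) :=
  G.edgeFinset.filter fun e => ∀ x ∈ e, ∀ y ∈ e, f x = f y

def neighborsOfColorExcept (f : V → α) (v x : V) (a : α) : Finset V :=
  ((G.neighborFinset v).erase x).filter (f · = a)

@[simp]
lemma mk_mem_monoEdgeFinset {f : V → α} {x y : V} :
    s(x, y) ∈ G.monoEdgeFinset f ↔ G.Adj x y ∧ f x = f y := by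
  simp only [monoEdgeFinset, mem_filter, mem_edgeFinset, mem_edgeSet, Sym2.forall_mem_pair]
  grind

@[simp]
lemma mem_neighborsOfColorExcept {f : V → α} {v x y : V} {a : α} :
    y ∈ G.neighborsOfColorExcept f v x a ↔ y ≠ x ∧ G.Adj v y ∧ f y = a := by
  simp [neighborsOfColorExcept, and_assoc]

omit [Fintype V] in
lemma card_eq_card_filter_incidence (s : Finset (Sym2 V)) (u w : V) :
    #s = #(s.filter fun e => u ∉ e ∧ w ∉ e) + #(s.filter fun e => u ∈ e ∧ w ∉ e)
      + #(s.filter fun e => w ∈ e ∧ u ∉ e) + #(s.filter fun e => u ∈ e ∧ w ∈ e) := by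
  simp only [card_filter]
  rw [card_eq_sum_ones, ← sum_add_distrib, ← sum_add_distrib, ← sum_add_distrib]
  refine sum_congr rfl fun e _ => ?_
  by_cases hu : u ∈ e <;> by_cases hw : w ∈ e <;> simp [hu, hw]

lemma card_filter_monoEdgeFinset_mem_left {u w : V} (huw : u ≠ w) (f : V → α) :
    #((G.monoEdgeFinset f).filter fun e => u ∈ e ∧ w ∉ e)
      = #(G.neighborsOfColorExcept f u w (f u)) := by
  have : (G.monoEdgeFinset f).filter (fun e => u ∈ e ∧ w ∉ e)
      = (G.neighborsOfColorExcept f u w (f u)).image (s(u, ·)) := by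
    ext e
    induction e using Sym2.inductionOn with | _ x y => ?_
    simp only [mem_filter, mk_mem_monoEdgeFinset, mem_image, mem_neighborsOfColorExcept,
      Sym2.mem_iff, Sym2.eq_iff]
    grind [G.ne_of_adj, G.adj_comm]
  rw [this, card_image_of_injective _ fun _ _ => Sym2.congr_right.mp]

lemma filter_monoEdgeFinset_mem_both_eq_empty {f : V → α} {u w : V} (hf : f u ≠ f w) :
    (G.monoEdgeFinset f).filter (fun e => u ∈ e ∧ w ∈ e) = ∅ := by
  ext e
  induction e using Sym2.inductionOn with | _ x y => ?_
  simp only [mem_filter, mk_mem_monoEdgeFinset, Sym2.mem_iff, notMem_empty, iff_false]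
  grind

lemma filter_monoEdgeFinset_comp_swap_notMem (f : V → α) (u w : V) :
    (G.monoEdgeFinset (f ∘ Equiv.swap u w)).filter (fun e => u ∉ e ∧ w ∉ e)
      = (G.monoEdgeFinset f).filter (fun e => u ∉ e ∧ w ∉ e) := by
  ext e
  induction e using Sym2.inductionOn with | _ x y => ?_
  simp only [mem_filter, mk_mem_monoEdgeFinset, Function.comp_apply, Sym2.mem_iff]
  grind [Equiv.swap_apply_of_ne_of_ne]

lemma card_neighborsOfColorExcept_le_degree (f : V → α) (v x : V) (a : α) :
    #(G.neighborsOfColorExcept f v x a) ≤ G.degree v :=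
  ((card_filter_le _ _).trans (card_erase_le)).trans_eq (G.card_neighborFinset_eq_degree v)

lemma neighborsOfColorExcept_comp_swap (f : V → α) (v x : V) (a : α) :
    G.neighborsOfColorExcept (f ∘ Equiv.swap v x) v x a = G.neighborsOfColorExcept f v x a := by
  ext y
  simp only [mem_neighborsOfColorExcept, Function.comp_apply]
  grind [G.ne_of_adj, Equiv.swap_apply_of_ne_of_ne]

theorem card_monoEdgeFinset_comp_swap_add {f : V → α} {u w : V} (hf : f u ≠ f w) :
    #(G.monoEdgeFinset (f ∘ Equiv.swap u w)) + #(G.neighborsOfColorExcept f u w (f u))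
        + #(G.neighborsOfColorExcept f w u (f w))
      = #(G.monoEdgeFinset f) + #(G.neighborsOfColorExcept f u w (f w))
        + #(G.neighborsOfColorExcept f w u (f u)) := by
  have huw : u ≠ w := ne_of_apply_ne f hf
  have hgu : (f ∘ Equiv.swap u w) u = f w := by simp
  have hgw : (f ∘ Equiv.swap u w) w = f u := by simp
  rw [card_eq_card_filter_incidence (G.monoEdgeFinset f) u w,
    card_eq_card_filter_incidence (G.monoEdgeFinset (f ∘ Equiv.swap u w)) u w,
    filter_monoEdgeFinset_comp_swap_notMem,
    card_filter_monoEdgeFinset_mem_left G huw, card_filter_monoEdgeFinset_mem_left G huw.symm,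
    card_filter_monoEdgeFinset_mem_left G huw, card_filter_monoEdgeFinset_mem_left G huw.symm,
    filter_monoEdgeFinset_mem_both_eq_empty G hf,
    filter_monoEdgeFinset_mem_both_eq_empty G (by rwa [hgu, hgw, ne_comm]),
    hgu, hgw, neighborsOfColorExcept_comp_swap, Equiv.swap_comm, neighborsOfColorExcept_comp_swap]
  omega

end SimpleGraph

lemma add_le_add_of_swap_gains {du dw a1 b1 a2 b2 : ℕ} (hle : du ≤ dw) (hdw : dw ≤ du + 2)
    (hb1 : b1 ≤ du) (hi : a1 * dw < a2 * du) (hj : b2 * du < b1 * dw) :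
    a1 + b2 ≤ a2 + b1 ∧ (a1 + b2 = a2 + b1 → dw < 2 * b2 ∧ b2 < dw) := by
  have ha : a1 < a2 := Nat.lt_of_mul_lt_mul_right (hi.trans_le (Nat.mul_le_mul_left a2 hle))
  have hb : b2 * du < b1 * du + 2 * b1 :=
    hj.trans_le (by simpa [Nat.mul_add, Nat.mul_comm] using Nat.mul_le_mul_left b1 hdw)
  constructor
  · by_contra! h
    -- otherwise `b2 ≥ b1 + 2`, and then `2 * du < 2 * b1`
    have : (b1 + 2) * du ≤ b2 * du := Nat.mul_le_mul_right _ (by omega)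
    nlinarith
  · intro h
    -- now `b2 ≥ b1 + 1`, so `du < 2 * b1` and `2 * b2 ≥ du + 3 > dw`
    have : (b1 + 1) * du ≤ b2 * du := Nat.mul_le_mul_right _ (by omega)
    refine ⟨by nlinarith, Nat.lt_of_mul_lt_mul_right (a := du) ?_⟩
    calc b2 * du < b1 * dw := hj
      _ ≤ dw * du := by rw [Nat.mul_comm dw]; exact Nat.mul_le_mul_right dw hb1

section SwapSchelling

variable {V A : Type*} [Fintype V] [DecidableEq V] (G : SimpleGraph V) [DecidableRel G.Adj]
  {k : ℕ} (c : A → Fin k) (σ : A ≃ V)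

omit [Fintype V] in
lemma ssgSwap_apply_left (i j : A) : ssgSwap σ i j i = σ j := by
  simp [ssgSwap]

omit [Fintype V] in
lemma ssgSwap_apply_right (i j : A) : ssgSwap σ i j j = σ i := by
  simp [ssgSwap]

omit [Fintype V] in
lemma ssgSwap_comm (i j : A) : ssgSwap σ i j = ssgSwap σ j i := by
  rw [ssgSwap, ssgSwap, Equiv.swap_comm]

omit [Fintype V] in
lemma comp_ssgSwap_symm (i j : A) :
    c ∘ (ssgSwap σ i j).symm = (c ∘ σ.symm) ∘ Equiv.swap (σ i) (σ j) := by
  ext v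
  simp [ssgSwap, Equiv.symm_swap]

lemma ssgPhi_eq : ssgPhi G c σ = #(G.monoEdgeFinset (c ∘ σ.symm)) := rfl

lemma ssgPhi_ssgSwap (i j : A) :
    ssgPhi G c (ssgSwap σ i j) = #(G.monoEdgeFinset ((c ∘ σ.symm) ∘ Equiv.swap (σ i) (σ j))) := by
  rw [ssgPhi_eq, comp_ssgSwap_symm]

lemma ssgUtil_nonneg (i : A) : 0 ≤ ssgUtil G c σ i := by
  unfold ssgUtil; positivity

lemma degree_pos_of_ssgUtil_pos {i : A} (h : 0 < ssgUtil G c σ i) : 0 < G.degree (σ i) := by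
  by_contra! h0
  simp [ssgUtil, Nat.le_zero.mp h0] at h

lemma ssgUtil_eq_card_div {i l : A} (h : c l ≠ c i) :
    ssgUtil G c σ i =
      #(G.neighborsOfColorExcept (c ∘ σ.symm) (σ i) (σ l) (c i)) / G.degree (σ i) := by
  rw [ssgUtil, neighborsOfColorExcept, filter_erase, erase_eq_of_notMem (by simp [h])]
  rfl

lemma ssgUtil_ssgSwap_left {i j : A} (h : c i ≠ c j) :
    ssgUtil G c (ssgSwap σ i j) i =
      #(G.neighborsOfColorExcept (c ∘ σ.symm) (σ j) (σ i) (c i)) / G.degree (σ j) := by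
  rw [ssgUtil_eq_card_div G c _ h.symm, ssgSwap_apply_left, ssgSwap_apply_right,
    comp_ssgSwap_symm, Equiv.swap_comm, neighborsOfColorExcept_comp_swap]

end SwapSchelling

theorem stmt2_general {V A : Type*} [Fintype V] [DecidableEq V]
    (G : SimpleGraph V) [DecidableRel G.Adj] {k : ℕ}
    (c : A → Fin k) (σ : A ≃ V) (i j : A)
    (hswap : ssgProfitable G c σ i j)
    (hdeg : G.degree (σ i) ≤ G.degree (σ j))
    (hdiff : G.degree (σ j) - G.degree (σ i) ≤ 2) :
    ssgPhi G c σ ≤ ssgPhi G c (ssgSwap σ i j) ∧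
      (ssgPhi G c (ssgSwap σ i j) = ssgPhi G c σ →
        (1 : ℚ) / 2 < ssgUtil G c σ j ∧ ssgUtil G c σ j < 1) := by
  obtain ⟨hc, hi, hj⟩ := hswap
  have hdu : 0 < G.degree (σ i) := by
    rw [← ssgSwap_apply_right σ i j]
    exact degree_pos_of_ssgUtil_pos G c _ ((ssgUtil_nonneg G c σ j).trans_lt hj)
  have hdw : 0 < G.degree (σ j) := hdu.trans_le hdeg
  rw [ssgUtil_eq_card_div G c σ hc.symm, ssgUtil_ssgSwap_left G c σ hc,
    div_lt_div_iff₀ (by positivity) (by positivity)] at hi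
  rw [ssgUtil_eq_card_div G c σ hc, ssgSwap_comm, ssgUtil_ssgSwap_left G c σ hc.symm,
    div_lt_div_iff₀ (by positivity) (by positivity)] at hj
  norm_cast at hi hj
  have hΦ := G.card_monoEdgeFinset_comp_swap_add (f := c ∘ σ.symm) (u := σ i) (w := σ j)
    (by simpa using hc)
  simp only [Function.comp_apply, Equiv.symm_apply_apply] at hΦ
  obtain ⟨hle, heq⟩ := add_le_add_of_swap_gains hdeg (by omega)
    (G.card_neighborsOfColorExcept_le_degree _ _ _ _) hi hj
  rw [ssgPhi_eq, ssgPhi_ssgSwap, ssgUtil_eq_card_div G c σ hc]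
  refine ⟨by omega, fun h => ?_⟩
  obtain ⟨hhalf, hlt⟩ := heq (by omega)
  rw [lt_div_iff₀ (by positivity), div_lt_one (by positivity)]
  qify at hhalf hlt
  exact ⟨by linarith, hlt⟩

theorem stmt2 {V A : Type*} [Fintype V] [DecidableEq V]
    (G : SimpleGraph V) [DecidableRel G.Adj] {k : ℕ} (hk : 2 ≤ k)
    (c : A → Fin k) (σ : A ≃ V) (i j : A)
    (hswap : ssgProfitable G c σ i j)
    (hdeg : G.degree (σ i) ≤ G.degree (σ j))
    (hdiff : G.degree (σ j) - G.degree (σ i) ≤ 2) :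
    ssgPhi G c σ ≤ ssgPhi G c (ssgSwap σ i j) ∧
      (ssgPhi G c (ssgSwap σ i j) = ssgPhi G c σ →
        (1 : ℚ) / 2 < ssgUtil G c σ j ∧ ssgUtil G c σ j < 1) :=
  stmt2_general G c σ i j hswap hdeg hdiff
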